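/- Let p ∈ [0,1] and fix Δ with 0 < Δ and p + Δ/2 ≤ 1, and let c ∈ [μ, 1] with μ > 0. Suppose additionally that max(p + Δ/4, p + Δ/2) ≤ p_max ≤ 1 and let γ = max(μ, 1 − p_max). Then d(c·(p + Δ/4), c·(p + Δ/2)) ≥ μ·γ·Δ²/8. -/

import Mathlib

open scoped BigOperators

/-- Bernoulli KL divergence `d(p,q)` with continuous extension to the boundary:
`⊤` when `q ∈ {0,1}` and `p ≠ q` there. -/
noncomputable def klBer (p q : ℝ) : EReal :=
  if (q = 0 ∧ p ≠ 0) ∨ (q = 1 ∧ p ≠ 1) then ⊤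
  else ((p * Real.log (p / q) + (1 - p) * Real.log ((1 - p) / (1 - q)) : ℝ) : EReal)

/-- Real-valued Bernoulli KL divergence formula (valid where finite). -/
noncomputable def klBerR (p q : ℝ) : ℝ :=
  p * Real.log (p / q) + (1 - p) * Real.log ((1 - p) / (1 - q))

/-!
On `[x, y] ⊆ (0, 1)` the Bernoulli divergence `d(x, ·)` has derivative `(t - x) / (t (1 - t))`,
so `d(x, y) ≥ (y - x)² / (2 sup t (1 - t))`. For `x = c a` and `y = c b` the variance `t (1 - t)`
is at most `1 / 4` and at most `t ≤ c b`; since `4 b (1 - b) ≤ 1` this gives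
`4 max(c, 1 - b) t (1 - t) ≤ c`, hence `d(c a, c b) ≥ 2 c max(c, 1 - b) (b - a)²`. Take
`b - a = Δ / 4` and use `μ γ ≤ c max(c, 1 - b)`.
-/

lemma klBer_eq_coe_klBerR {x y : ℝ} (hy0 : y ≠ 0) (hy1 : y ≠ 1) :
    klBer x y = (klBerR x y : EReal) := by
  simp [klBer, klBerR, hy0, hy1]

lemma klBer_one_eq_top {x : ℝ} (hx : x ≠ 1) : klBer x 1 = ⊤ := by
  simp [klBer, hx]

lemma klBerR_self (x : ℝ) : klBerR x x = 0 := by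
  by_cases hx0 : x = 0
  · simp [klBerR, hx0]
  by_cases hx1 : 1 - x = 0
  · simp [klBerR, hx1]
  simp [klBerR, div_self hx0, div_self hx1]

lemma hasDerivAt_klBerR_right {x t : ℝ} (hx0 : x ≠ 0) (hx1 : 1 - x ≠ 0) (ht0 : t ≠ 0)
    (ht1 : 1 - t ≠ 0) : HasDerivAt (klBerR x) ((t - x) / (t * (1 - t))) t := by
  have hlog := ((hasDerivAt_const t x).fun_div (hasDerivAt_id t) ht0).log (div_ne_zero hx0 ht0)
  have hlog' := ((hasDerivAt_const t (1 - x)).fun_div ((hasDerivAt_id t).const_sub 1) ht1).log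
    (div_ne_zero hx1 ht1)
  refine ((hlog.const_mul x).add (hlog'.const_mul (1 - x))).congr_deriv ?_
  simp only [id]
  field_simp
  ring

/-- On `[x, y]`, `∂ₜ klBerR x t = (t - x) / (t (1 - t)) ≥ r (t - x)`, and both sides of the
inequality vanish at `y = x`. -/
lemma mul_sq_sub_div_two_le_klBerR {x y r : ℝ} (hx : 0 < x) (hxy : x ≤ y) (hy : y < 1)
    (hr : ∀ t ∈ Set.Icc x y, r * (t * (1 - t)) ≤ 1) :
    r * (y - x) ^ 2 / 2 ≤ klBerR x y := by
  set F : ℝ → ℝ := fun t => klBerR x t - r * (t - x) ^ 2 / 2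
  have hF : ∀ t ∈ Set.Icc x y,
      HasDerivAt F ((t - x) / (t * (1 - t)) - r * (t - x)) t := by
    intro t ⟨hxt, hty⟩
    have hpow : HasDerivAt (fun s => r * (s - x) ^ 2 / 2) (r * (t - x)) t := by
      refine ((((hasDerivAt_id t).sub_const x).pow 2 |>.const_mul r).div_const 2).congr_deriv ?_
      simp only [id]
      ring
    exact (hasDerivAt_klBerR_right hx.ne' (by linarith) (by linarith) (by linarith)).sub hpow
  have hmono : MonotoneOn F (Set.Icc x y) := by
    refine monotoneOn_of_hasDerivWithinAt_nonneg (convex_Icc x y)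
      (fun t ht => (hF t ht).continuousAt.continuousWithinAt)
      (fun t ht => (hF t (interior_subset ht)).hasDerivWithinAt) ?_
    rw [interior_Icc]
    intro t ⟨hxt, hty⟩
    have hvar : 0 < t * (1 - t) := mul_pos (by linarith) (by linarith)
    have hrt : r ≤ 1 / (t * (1 - t)) := by
      rw [le_div_iff₀ hvar]; exact hr t ⟨hxt.le, hty.le⟩
    rw [show (t - x) / (t * (1 - t)) - r * (t - x) = (t - x) * (1 / (t * (1 - t)) - r) by ring]
    exact mul_nonneg (by linarith) (by linarith)
  have := hmono (Set.left_mem_Icc.2 hxy) (Set.right_mem_Icc.2 hxy) hxy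
  simp only [F, klBerR_self, sub_self] at this
  linarith

lemma four_mul_max_mul_le {b c t : ℝ} (hc : 0 < c) (ht : t ≤ c * b) :
    4 * max c (1 - b) * (t * (1 - t)) ≤ c := by
  rcases max_cases c (1 - b) with ⟨hmax, -⟩ | ⟨hmax, hcb⟩ <;> rw [hmax]
  · nlinarith [sq_nonneg (1 - 2 * t)]
  · have hvar : t * (1 - t) ≤ c * b := by nlinarith [sq_nonneg t]
    nlinarith [sq_nonneg (1 - 2 * b), mul_le_mul_of_nonneg_left hvar (by linarith : 0 ≤ 1 - b)]

lemma two_mul_max_mul_sq_le_klBerR {a b c : ℝ} (ha : 0 < a) (hab : a ≤ b) (hc : 0 < c)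
    (hcb : c * b < 1) :
    2 * c * max c (1 - b) * (b - a) ^ 2 ≤ klBerR (c * a) (c * b) := by
  have hbound := mul_sq_sub_div_two_le_klBerR (r := 4 * max c (1 - b) / c) (mul_pos hc ha)
    (mul_le_mul_of_nonneg_left hab hc.le) hcb fun t ht => by
      rw [div_mul_eq_mul_div, div_le_one hc]
      exact four_mul_max_mul_le hc ht.2
  convert hbound using 1
  field_simp
  ring

theorem kl_gap_estimate_general (p Δ μ c pmax γ : ℝ) (hp : p ∈ Set.Icc (0 : ℝ) 1)
    (hΔ : 0 < Δ) (hpΔ : p + Δ / 2 ≤ 1) (hμ : 0 < μ) (hc : c ∈ Set.Icc μ 1)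
    (hpmax : max (p + Δ / 4) (p + Δ / 2) ≤ pmax)
    (hγ : γ = max μ (1 - pmax)) :
    ((μ * γ * Δ ^ 2 / 8 : ℝ) : EReal) ≤ klBer (c * (p + Δ / 4)) (c * (p + Δ / 2)) := by
  obtain ⟨hp0, -⟩ := hp
  obtain ⟨hμc, hc1⟩ := hc
  have hc0 : 0 < c := hμ.trans_le hμc
  have hb1 : c * (p + Δ / 2) ≤ 1 := mul_le_one₀ hc1 (by positivity) hpΔ
  rcases hb1.lt_or_eq with hlt | heq
  · rw [klBer_eq_coe_klBerR (by positivity) hlt.ne, EReal.coe_le_coe_iff]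
    have hγ_le : μ * γ ≤ c * max c (1 - (p + Δ / 2)) := by
      rw [hγ]
      gcongr
      linarith [le_max_right (p + Δ / 4) (p + Δ / 2)]
    calc μ * γ * Δ ^ 2 / 8 = 2 * (μ * γ) * (p + Δ / 2 - (p + Δ / 4)) ^ 2 := by ring
      _ ≤ 2 * (c * max c (1 - (p + Δ / 2))) * (p + Δ / 2 - (p + Δ / 4)) ^ 2 := by gcongr
      _ = 2 * c * max c (1 - (p + Δ / 2)) * (p + Δ / 2 - (p + Δ / 4)) ^ 2 := by ring
      _ ≤ _ := two_mul_max_mul_sq_le_klBerR (by positivity) (by linarith) hc0 hlt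
  · rw [heq, klBer_one_eq_top ((mul_lt_mul_of_pos_left (by linarith) hc0).trans_eq heq).ne]
    exact le_top

theorem kl_gap_estimate (p Δ μ c pmax γ : ℝ) (hp : p ∈ Set.Icc (0 : ℝ) 1)
    (hΔ : 0 < Δ) (hpΔ : p + Δ / 2 ≤ 1) (hμ : 0 < μ) (hc : c ∈ Set.Icc μ 1)
    (hpmax : max (p + Δ / 4) (p + Δ / 2) ≤ pmax) (hpmax1 : pmax ≤ 1)
    (hγ : γ = max μ (1 - pmax)) :
    ((μ * γ * Δ ^ 2 / 8 : ℝ) : EReal) ≤ klBer (c * (p + Δ / 4)) (c * (p + Δ / 2)) :=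
  kl_gap_estimate_general p Δ μ c pmax γ hp hΔ hpΔ hμ hc hpmax hγ
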